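/- arXiv:2006.11159 — 3 statements merged into one kernel-verified Lean document; each statement's English description precedes it below -/
import Mathlib

section
/- Let G and H be s-graphs (src functions injective) and ∼ the fusion equivalence on V_G ⊔ V_{H'} generated by src_G(α) ∼ src_{H'}(α). Then for all g, g' ∈ V_G: g ∼ g' iff g = g'; similarly for all h, h' ∈ V_{H'}: h ∼ h' iff h = h'. -/
/-- The labels (source names) assigned to a vertex `v` of an (m)s-graph with
type `τ` and source map `src`. -/
def slab {L V : Type} (τ : Finset L) (src : L → V) (v : V) : Set L :=
  {α | α ∈ τ ∧ src α = v}

/-- The relation `R` on the disjoint union `V_G ⊕ V_{H'}` relating `g ∈ V_G`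
to `h ∈ V_{H'}` iff some shared label `α` has `g = src_G α` and `h = src_{H'} α`. -/
def fuseRel {L V W : Type} (τG τH : Finset L) (srcG : L → V) (srcH : L → W) :
    (V ⊕ W) → (V ⊕ W) → Prop :=
  fun x y => ∃ α, α ∈ τG ∧ α ∈ τH ∧ x = Sum.inl (srcG α) ∧ y = Sum.inr (srcH α)

/-- The fusion equivalence `∼`: the reflexive-symmetric-transitive closure of `fuseRel`. -/
def fuseEqv {L V W : Type} (τG τH : Finset L) (srcG : L → V) (srcH : L → W) :
    (V ⊕ W) → (V ⊕ W) → Prop :=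
  Relation.EqvGen (fuseRel τG τH srcG srcH)

/-- A cross-section `X` of `∼`: every vertex is equivalent to exactly one element of `X`. -/
def crossSection {L V W : Type} (τG τH : Finset L) (srcG : L → V) (srcH : L → W)
    (X : Set (V ⊕ W)) : Prop :=
  ∀ v, ∃! x, x ∈ X ∧ fuseEqv τG τH srcG srcH v x

/-- `slab_{G∥H}(x) = Slab_G([x]) ∪ Slab_{H'}([x])`, the labels carried by the
`∼`-class of `x`. -/
def slabComp {L V W : Type} (τG τH : Finset L) (srcG : L → V) (srcH : L → W)
    (x : V ⊕ W) : Set L :=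
  {α | (α ∈ τG ∧ fuseEqv τG τH srcG srcH (Sum.inl (srcG α)) x) ∨
       (α ∈ τH ∧ fuseEqv τG τH srcG srcH (Sum.inr (srcH α)) x)}

/-- `V_K`: the representatives in `X` of classes meeting `V_{H'}`. -/
def VK {L V W : Type} (τG τH : Finset L) (srcG : L → V) (srcH : L → W)
    (X : Set (V ⊕ W)) : Set (V ⊕ W) :=
  {x ∈ X | ∃ h : W, fuseEqv τG τH srcG srcH (Sum.inr h) x}


/-- for s-graphs (injective source maps), `∼` restricted to `V_G`
and to `V_{H'}` is trivial: `g ∼ g' ↔ g = g'` and `h ∼ h' ↔ h = h'`. -/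
theorem stmt8 {L V W : Type} (τG τH : Finset L) (srcG : L → V) (srcH : L → W)
    (hG : ∀ a ∈ τG, ∀ b ∈ τG, srcG a = srcG b → a = b)
    (hH : ∀ a ∈ τH, ∀ b ∈ τH, srcH a = srcH b → a = b) :
    (∀ g g' : V, fuseEqv τG τH srcG srcH (Sum.inl g) (Sum.inl g') ↔ g = g') ∧
    (∀ h h' : W, fuseEqv τG τH srcG srcH (Sum.inr h) (Sum.inr h') ↔ h = h') := by
  have key : ∀ x y, fuseEqv τG τH srcG srcH x y →
      x = y ∨ fuseRel τG τH srcG srcH x y ∨ fuseRel τG τH srcG srcH y x := by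
    intro x y hxy
    induction hxy with
    | rel a b h => exact Or.inr (Or.inl h)
    | refl a => exact Or.inl rfl
    | symm a b _ ih =>
      rcases ih with h | h | h
      · exact Or.inl h.symm
      · exact Or.inr (Or.inr h)
      · exact Or.inr (Or.inl h)
    | trans a b c _ _ ih1 ih2 =>
      rcases ih1 with h1 | h1 | h1
      · subst h1; exact ih2
      · rcases ih2 with h2 | h2 | h2
        · subst h2; exact Or.inr (Or.inl h1)
        · obtain ⟨α, -, -, -, hb⟩ := h1
          obtain ⟨β, -, -, hb', -⟩ := h2
          rw [hb] at hb'; exact absurd hb' (by simp)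
        · obtain ⟨α, hαG, hαH, ha, hb⟩ := h1
          obtain ⟨β, hβG, hβH, hc, hb'⟩ := h2
          left
          obtain rfl : α = β := hH _ hαH _ hβH (by
            rw [hb] at hb'; exact Sum.inr.inj hb')
          rw [ha, hc]
      · rcases ih2 with h2 | h2 | h2
        · subst h2; exact Or.inr (Or.inr h1)
        · obtain ⟨α, hαG, hαH, hb, ha⟩ := h1
          obtain ⟨β, hβG, hβH, hb', hc⟩ := h2
          left
          obtain rfl : α = β := hG _ hαG _ hβG (by
            rw [hb] at hb'; exact (Sum.inl.inj hb'))
          rw [ha, hc]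
        · obtain ⟨α, -, -, hb, -⟩ := h1
          obtain ⟨β, -, -, -, hb'⟩ := h2
          rw [hb] at hb'; exact absurd hb' (by simp)
  constructor
  · intro g g'
    constructor
    · intro h
      rcases key _ _ h with h | h | h
      · exact Sum.inl.inj h
      · obtain ⟨α, -, -, -, hy⟩ := h; exact absurd hy (by simp)
      · obtain ⟨α, -, -, -, hy⟩ := h; exact absurd hy (by simp)
    · rintro rfl; exact Relation.EqvGen.refl _
  · intro h h'
    constructor
    · intro hhh
      rcases key _ _ hhh with h1 | h1 | h1
      · exact Sum.inr.inj h1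
      · obtain ⟨α, -, -, hx, -⟩ := h1; exact absurd hx (by simp)
      · obtain ⟨α, -, -, hx, -⟩ := h1; exact absurd hx (by simp)
    · rintro rfl; exact Relation.EqvGen.refl _
end

section
/- Let G and H be s-graphs, ∼ the fusion equivalence, and X a cross-section with V_G ⊆ X. Then for every g ∈ V_G in the domain of slab_{G∥H}: Slab_{H'}([g]) ⊆ Slab_G([g]), and consequently slab_{G∥H}(g) = slab_G(g). -/
private lemma key {L V W : Type} (τG τH : Finset L) (srcG : L → V) (srcH : L → W)
    (hH : ∀ a ∈ τH, ∀ b ∈ τH, srcH a = srcH b → a = b)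
    {x y : V ⊕ W} (h : fuseEqv τG τH srcG srcH x y) :
    ∀ β ∈ τH,
      (x = Sum.inr (srcH β) →
        (β ∈ τG ∧ fuseEqv τG τH srcG srcH (Sum.inl (srcG β)) y) ∨ y = Sum.inr (srcH β)) ∧
      (y = Sum.inr (srcH β) →
        (β ∈ τG ∧ fuseEqv τG τH srcG srcH (Sum.inl (srcG β)) x) ∨ x = Sum.inr (srcH β)) := by
  induction h with
  | rel a b hab =>
      obtain ⟨α, hαG, hαH, ha, hb⟩ := hab
      intro β hβ
      constructor
      · intro hx; rw [ha] at hx; exact absurd hx (by simp)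
      · intro hy
        rw [hb] at hy
        have : β = α := hH β hβ α hαH (Sum.inr.inj hy).symm
        subst this
        exact Or.inl ⟨hαG, ha ▸ Relation.EqvGen.refl _⟩
  | refl a => intro β hβ; exact ⟨fun hx => Or.inr hx, fun hy => Or.inr hy⟩
  | symm a b hab ih => intro β hβ; exact ⟨(ih β hβ).2, (ih β hβ).1⟩
  | trans a b c hab hbc ih1 ih2 =>
      intro β hβ
      constructor
      · intro hx
        rcases (ih1 β hβ).1 hx with ⟨hβG, he⟩ | hb
        · exact Or.inl ⟨hβG, he.trans _ _ _ hbc⟩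
        · rcases (ih2 β hβ).1 hb with h' | h'
          · exact Or.inl h'
          · exact Or.inr h'
      · intro hz
        rcases (ih2 β hβ).2 hz with ⟨hβG, he⟩ | hb
        · exact Or.inl ⟨hβG, he.trans _ _ _ (hab.symm _ _)⟩
        · rcases (ih1 β hβ).2 hb with h' | h'
          · exact Or.inl h'
          · exact Or.inr h'

/-- for s-graphs and a cross-section `X ⊇ V_G`, for every
`g ∈ V_G` we have `Slab_{H'}([g]) ⊆ Slab_G([g])`, hence
`slab_{G∥H}(g) = slab_G(g)`. -/
theorem stmt11 {L V W : Type} (τG τH : Finset L) (srcG : L → V) (srcH : L → W)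
    (hG : ∀ a ∈ τG, ∀ b ∈ τG, srcG a = srcG b → a = b)
    (hH : ∀ a ∈ τH, ∀ b ∈ τH, srcH a = srcH b → a = b)
    (X : Set (V ⊕ W)) (hX : crossSection τG τH srcG srcH X)
    (hGX : Set.range (Sum.inl : V → V ⊕ W) ⊆ X) (g : V) :
    ({α | α ∈ τH ∧ fuseEqv τG τH srcG srcH (Sum.inr (srcH α)) (Sum.inl g)} ⊆
      {α | α ∈ τG ∧ fuseEqv τG τH srcG srcH (Sum.inl (srcG α)) (Sum.inl g)}) ∧
    slabComp τG τH srcG srcH (Sum.inl g) = slab τG srcG g := by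
  have sub : {α | α ∈ τH ∧ fuseEqv τG τH srcG srcH (Sum.inr (srcH α)) (Sum.inl g)} ⊆
      {α | α ∈ τG ∧ fuseEqv τG τH srcG srcH (Sum.inl (srcG α)) (Sum.inl g)} := by
    intro α ⟨hαH, he⟩
    rcases (key τG τH srcG srcH hH he α hαH).1 rfl with h | h
    · exact h
    · exact absurd h (by simp)
  refine ⟨sub, ?_⟩
  ext α
  constructor
  · rintro (⟨hαG, he⟩ | hα)
    · refine ⟨hαG, ?_⟩
      have h1 : Sum.inl (srcG α) ∈ X := hGX ⟨_, rfl⟩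
      have h2 : (Sum.inl g : V ⊕ W) ∈ X := hGX ⟨_, rfl⟩
      obtain ⟨x, _, hu⟩ := hX (Sum.inl (srcG α))
      have e1 := hu _ ⟨h1, Relation.EqvGen.refl _⟩
      have e2 := hu _ ⟨h2, he⟩
      exact Sum.inl.inj (e2.trans e1.symm).symm
    · obtain ⟨hαG, he⟩ := sub hα
      refine ⟨hαG, ?_⟩
      have h1 : Sum.inl (srcG α) ∈ X := hGX ⟨_, rfl⟩
      have h2 : (Sum.inl g : V ⊕ W) ∈ X := hGX ⟨_, rfl⟩
      obtain ⟨x, _, hu⟩ := hX (Sum.inl (srcG α))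
      have e1 := hu _ ⟨h1, Relation.EqvGen.refl _⟩
      have e2 := hu _ ⟨h2, he⟩
      exact Sum.inl.inj (e2.trans e1.symm).symm
  · rintro ⟨hαG, hs⟩
    exact Or.inl ⟨hαG, hs ▸ Relation.EqvGen.refl _⟩
end

section
/- Let G and H be s-graphs and let G ∥ H denote the new (quotient-based) parallel composition of ms-graphs, with X chosen so that V_G ⊆ X. Then src_{G∥H} = src_G ∪ src_K where src_K = src_{G∥H} restricted to τ(H'); i.e., the new parallel composition agrees (up to isomorphism) with Courcelle–Engelfriet's original parallel composition of s-graphs. -/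
/-- for s-graphs with `X ⊇ V_G`, the new source map decomposes as
`src_{G∥H} = src_G ∪ src_K`: on `τ(G)` it is `src_G` (viewed inside the
quotient), and on `τ(H')` it lands in `V_K` (where it is `src_K` by
definition); thus the new composition agrees with the original one. -/
theorem stmt16 {L V W : Type} [DecidableEq L] (τG τH : Finset L) (srcG : L → V) (srcH : L → W)
    (hG : ∀ a ∈ τG, ∀ b ∈ τG, srcG a = srcG b → a = b)
    (hH : ∀ a ∈ τH, ∀ b ∈ τH, srcH a = srcH b → a = b)
    (X : Set (V ⊕ W)) (hX : crossSection τG τH srcG srcH X)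
    (hGX : Set.range (Sum.inl : V → V ⊕ W) ⊆ X)
    (srcC : L → V ⊕ W)
    (hC : ∀ α ∈ τG ∪ τH, srcC α ∈ X ∧ α ∈ slabComp τG τH srcG srcH (srcC α)) :
    (∀ α ∈ τG, srcC α = Sum.inl (srcG α)) ∧
    (∀ α ∈ τH, srcC α ∈ VK τG τH srcG srcH X) := by
  constructor
  · intro α hα
    obtain ⟨hmem, hslab⟩ := hC α (Finset.mem_union_left _ hα)
    have key : fuseEqv τG τH srcG srcH (Sum.inl (srcG α)) (srcC α) := by
      rcases hslab with ⟨_, h⟩ | ⟨hαH, h⟩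
      · exact h
      · exact .trans _ _ _ (.rel _ _ ⟨α, hα, hαH, rfl, rfl⟩) h
    obtain ⟨x, _, hun⟩ := hX (Sum.inl (srcG α))
    have h1 := hun (srcC α) ⟨hmem, key⟩
    have h2 := hun (Sum.inl (srcG α)) ⟨hGX ⟨srcG α, rfl⟩, .refl _⟩
    rw [h1, h2]
  · intro α hα
    obtain ⟨hmem, hslab⟩ := hC α (Finset.mem_union_right _ hα)
    refine ⟨hmem, srcH α, ?_⟩
    rcases hslab with ⟨hαG, h⟩ | ⟨_, h⟩
    · exact .trans _ _ _ (.symm _ _ (.rel _ _ ⟨α, hαG, hα, rfl, rfl⟩)) h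
    · exact h
end
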